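/- In an effect algebra satisfying the ACC, every element x of a → b satisfies: x ⊙ a is defined and x ⊙ a ≤ b; moreover if a ⊙ b is defined then there exists d ∈ (b → (a⊙b)) with a ≤ d. -/
import Mathlib


structure EffectAlgebra (E : Type*) where
  add : E → E → Option E
  zero : E
  one : E
  supp : E → E
  comm : ∀ a b, add a b = add b a
  assoc : ∀ a b c ab abc, add a b = some ab → add ab c = some abc →
    ∃ bc, add b c = some bc ∧ add a bc = some abc
  add_supp : ∀ a, add a (supp a) = some one
  supp_unique : ∀ a b, add a b = some one → b = supp a
  one_def : ∀ a b, add a one = some b → a = zero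

namespace EffectAlgebra

variable {E : Type*}

/-- induced order: a ≤ b iff ∃ c, a+c = b -/
def le (A : EffectAlgebra E) (a b : E) : Prop := ∃ c, A.add a c = some b

/-- a ⊙ b := (a'+b')' -/
def dot (A : EffectAlgebra E) (a b : E) : Option E :=
  (A.add (A.supp a) (A.supp b)).map A.supp

/-- ascending chain condition: every ascending sequence repeats -/
def ACC (A : EffectAlgebra E) : Prop :=
  ∀ f : ℕ → E, (∀ n, A.le (f n) (f (n + 1))) → ∃ n, f n = f (n + 1)

/-- {x | x ⊙ b defined and x ⊙ b ≤ c} -/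
def impSet (A : EffectAlgebra E) (b c : E) : Set E :=
  {x | ∃ d, A.dot x b = some d ∧ A.le d c}

/-- unsharp implication b → c := Max of impSet -/
def arrow (A : EffectAlgebra E) (b c : E) : Set E :=
  {x | x ∈ A.impSet b c ∧ ∀ y ∈ A.impSet b c, A.le x y → x = y}

/-- common lower bounds -/
def lb (A : EffectAlgebra E) (a b : E) : Set E :=
  {x | A.le x a ∧ A.le x b}

/-- Max L(a,b) -/
def maxLb (A : EffectAlgebra E) (a b : E) : Set E :=
  {x | x ∈ A.lb a b ∧ ∀ y ∈ A.lb a b, A.le x y → x = y}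

/-- a ⇒ b := a' + Max L(a,b) elementwise -/
def darr (A : EffectAlgebra E) (a b : E) : Set E :=
  {e | ∃ d ∈ A.maxLb a b, A.add (A.supp a) d = some e}

end EffectAlgebra

open EffectAlgebra

namespace EffectAlgebra

variable {E : Type*}

lemma supp_supp (A : EffectAlgebra E) (a : E) : A.supp (A.supp a) = a :=
  (A.supp_unique (A.supp a) a ((A.comm _ _).trans (A.add_supp a))).symm

lemma supp_one (A : EffectAlgebra E) : A.supp A.one = A.zero := by
  have h1 : A.add A.one (A.supp A.one) = some A.one := A.add_supp A.one
  have h2 : A.add (A.supp A.one) A.one = some A.one := (A.comm _ _).symm.trans h1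
  exact (A.one_def _ _ h2) ▸ rfl

lemma add_zero' (A : EffectAlgebra E) (a : E) : A.add a A.zero = some a := by
  -- first prove for elements of the form supp x
  have key : ∀ x : E, A.add (A.supp x) A.zero = some (A.supp x) := by
    intro x
    have h1 : A.add x (A.supp x) = some A.one := A.add_supp x
    have h2 : A.add A.one A.zero = some A.one := by
      have := A.add_supp A.one
      rwa [A.supp_one] at this
    obtain ⟨bc, hbc1, hbc2⟩ := A.assoc x (A.supp x) A.zero A.one A.one h1 h2
    have : bc = A.supp x := A.supp_unique x bc hbc2
    rwa [this] at hbc1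
  have := key (A.supp a)
  rwa [A.supp_supp] at this

lemma le_refl (A : EffectAlgebra E) (a : E) : A.le a a := ⟨A.zero, A.add_zero' a⟩

lemma le_trans (A : EffectAlgebra E) {a b c : E} (h1 : A.le a b) (h2 : A.le b c) :
    A.le a c := by
  obtain ⟨x, hx⟩ := h1
  obtain ⟨y, hy⟩ := h2
  obtain ⟨z, _, hz2⟩ := A.assoc a x y b c hx hy
  exact ⟨z, hz2⟩

end EffectAlgebra

theorem stmt13 {E : Type*} (A : EffectAlgebra E) (hACC : A.ACC) (a b : E) :
    (∀ x ∈ A.arrow a b, ∃ d, A.dot x a = some d ∧ A.le d b) ∧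
    (∀ ab, A.dot a b = some ab → ∃ d ∈ A.arrow b ab, A.le a d) := by
  constructor
  · intro x hx
    exact hx.1
  · intro ab hab
    -- a ∈ impSet b ab
    have ha : a ∈ A.impSet b ab := ⟨ab, hab, A.le_refl ab⟩
    by_contra hcon
    push_neg at hcon
    -- every d in impSet b ab with a ≤ d is not maximal
    have step : ∀ d : {x : E // x ∈ A.impSet b ab ∧ A.le a x},
        ∃ y : {x : E // x ∈ A.impSet b ab ∧ A.le a x},
          A.le d.1 y.1 ∧ d.1 ≠ y.1 := by
      rintro ⟨d, hd, had⟩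
      have hnot : d ∉ A.arrow b ab := fun h => absurd had (hcon d h)
      simp only [arrow, Set.mem_setOf_eq, not_and, not_forall] at hnot
      obtain ⟨y, hy, hley, hne⟩ := hnot hd
      exact ⟨⟨y, hy, A.le_trans had hley⟩, hley, hne⟩
    choose g hg1 hg2 using step
    let f : ℕ → {x : E // x ∈ A.impSet b ab ∧ A.le a x} :=
      fun n => g^[n] ⟨a, ha, A.le_refl a⟩
    have hstep : ∀ n, f (n + 1) = g (f n) := fun n =>
      Function.iterate_succ_apply' g n _
    obtain ⟨n, hn⟩ := hACC (fun n => (f n).1) (by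
      intro n
      have := hg1 (f n)
      rw [← hstep n] at this
      exact this)
    have := hg2 (f n)
    rw [← hstep n] at this
    exact this hn
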